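/- Let G be an SMG with vertex set V of size n, Muller objectives Muller(φ_i), and let t ∈ ℕ. Let G′ be the unfolded game with vertex set V′ = {u ∈ V* | |u| ≤ t+1} (each vertex of G′ recording the suffix of length at most t of the history preceding the current vertex), transitions (xv, p, xvw) for |x| < t and (xv, p, x[1:]vw) for |x| = t whenever (v,p,w) ∈ Δ, and objectives Muller(φ′_i) where φ′_i replaces each variable v_j of φ_i by the disjunction of all history-annotated copies x v_j with |x| ≤ t. Then G′ has O(n^n) vertices when t ∈ O(n), pure t-memory strategies in G correspond to positional strategies in G′, and the answer to Pure t-memory-Muller-NCRSP for (G, μ) equals the answer to Positional-Muller-NCRSP for (G′, μ). -/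

import Mathlib

/- Common infrastructure for formalizing statements about stochastic
   multiplayer non-zero-sum games (SMGs) and the non-cooperative rational
   synthesis problem (NCRSP), following the paper's definitions. -/

open scoped ENNReal

namespace NCRSPPaper

/-! ### Game arenas -/

/-- A stochastic multiplayer game arena with players `Fin (k+1)` (player `0`
is the system) over vertex type `V`.  A vertex with `owner v = none` is a
nature vertex; its outgoing transition probabilities are given by `prob`.
Player-controlled vertices have their possible moves given by `edge`. -/
structure Arena (k : ℕ) (V : Type) where
  owner : V → Option (Fin (k + 1))
  edge : V → V → Bool
  prob : V → V → ℚ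
  init : V

variable {k : ℕ} {V : Type}

/-- The set of successors of a vertex. -/
def Arena.next (A : Arena k V) (u : V) : Set V :=
  {v | (A.owner u = none ∧ 0 < A.prob u v) ∨ (A.owner u ≠ none ∧ A.edge u v = true)}

/-- A terminal vertex: its only outgoing edge is the self loop. -/
def Arena.terminal (A : Arena k V) (v : V) : Prop := A.next v = {v}

/-- Well-formedness of an arena: every vertex has a successor and the
nature rows are probability distributions. -/
def Arena.WF [Fintype V] (A : Arena k V) : Prop :=
  (∀ u, (A.next u).Nonempty) ∧
  ∀ u, A.owner u = none → (∀ v, 0 ≤ A.prob u v) ∧ (∑ v, A.prob u v) = 1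

/-! ### Plays -/

/-- A play is an infinite sequence of vertices. -/
abbrev Play (V : Type) := ℕ → V

/-- `infSet π` is the set of vertices occurring infinitely often in `π`. -/
def infSet (π : Play V) : Set V := {v | ∀ m, ∃ l, m ≤ l ∧ π l = v}

/-! ### Strategies -/

/-- A (behavioral, possibly history-dependent, probabilistic) strategy:
given the history of vertices strictly preceding the current one and the
current vertex, it yields a probability distribution over vertices. -/
abbrev Strategy (V : Type) := List V → V → PMF V

/-- A strategy is valid for an arena if it only assigns positive
probability to successors of the current vertex. -/
def Strategy.Valid (A : Arena k V) (σ : Strategy V) : Prop :=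
  ∀ hist u v, σ hist u v ≠ 0 → v ∈ A.next u

/-- A stationary (memoryless) strategy depends only on the current vertex. -/
def Strategy.Stationary (σ : Strategy V) : Prop :=
  ∀ h h' u, σ h u = σ h' u

/-- A pure (deterministic) strategy assigns probability 1 to a single move. -/
def Strategy.Pure (σ : Strategy V) : Prop :=
  ∀ h u, ∃ v, σ h u v = 1

/-- A positional strategy is pure and stationary. -/
def Strategy.Positional (σ : Strategy V) : Prop :=
  Strategy.Stationary σ ∧ Strategy.Pure σ

/-- A finite-state strategy is realized by a Mealy machine with finitely
many memory states. -/
def Strategy.FiniteState (σ : Strategy V) : Prop :=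
  ∃ (M : Type) (_ : Finite M) (m0 : M) (upd : M → V → M) (out : M → V → PMF V),
    ∀ h u, σ h u = out (h.foldl upd m0) u

/-- A `t`-memory strategy only depends on the most recent `t` vertices of
the history (plus the current vertex). -/
def Strategy.TMemory (t : ℕ) (σ : Strategy V) : Prop :=
  ∀ h u, σ h u = σ (h.drop (h.length - t)) u

/-- A strategy profile assigns a strategy to every player. -/
abbrev Profile (k : ℕ) (V : Type) := Fin (k + 1) → Strategy V

def Profile.Valid (A : Arena k V) (σ : Profile k V) : Prop :=
  ∀ i, Strategy.Valid A (σ i)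

/-! ### The induced probability of a set of plays -/

/-- One-step transition probability at vertex `u` with preceding history
`hist`, under strategy profile `σ`. -/
noncomputable def Arena.stepProb (A : Arena k V) (σ : Profile k V)
    (hist : List V) (u v : V) : ℝ≥0∞ :=
  match A.owner u with
  | none => ENNReal.ofReal ((A.prob u v : ℚ) : ℝ)
  | some i => σ i hist u v

/-- Probability that, starting from current vertex `u` with preceding
history `hist`, the play continues with the given finite word. -/
noncomputable def extProb (A : Arena k V) (σ : Profile k V) :
    List V → V → List V → ℝ≥0∞
  | _, _, [] => 1
  | hist, u, v :: rest => A.stepProb σ hist u v * extProb A σ (hist ++ [u]) v rest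

/-- Probability that a play starting at `s` begins with the finite word `w`. -/
noncomputable def wordProbFrom [DecidableEq V] (A : Arena k V) (σ : Profile k V)
    (s : V) : List V → ℝ≥0∞
  | [] => 1
  | v :: rest => (if v = s then 1 else 0) * extProb A σ [] v rest

/-- The cylinder of plays extending a finite word. -/
def cyl (w : List V) : Set (Play V) :=
  {π | ∀ i (h : i < w.length), π i = w.get ⟨i, h⟩}

open scoped Classical in
/-- `PrFrom A σ s O` is the probability, under the strategy profile `σ`
(and nature's probabilities), that a play starting at `s` belongs to `O`.
It is defined as the Carathéodory outer measure generated by the natural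
premeasure on cylinder sets. -/
noncomputable def PrFrom [DecidableEq V] (A : Arena k V) (σ : Profile k V)
    (s : V) : Set (Play V) → ℝ≥0∞ :=
  fun O =>
    MeasureTheory.OuterMeasure.ofFunction
      (fun S => if S = ∅ then 0
                else ⨅ (w : List V) (_ : S ⊆ cyl w), wordProbFrom A σ s w)
      (by simp) O

/-- The payoff of player `i`: probability that the objective `O i` is met,
for the play started at the initial vertex. -/
noncomputable def Pay [DecidableEq V] (A : Arena k V)
    (O : Fin (k + 1) → Set (Play V)) (σ : Profile k V) (i : Fin (k + 1)) : ℝ≥0∞ :=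
  PrFrom A σ A.init (O i)

/-! ### Equilibria and synthesis problems -/

/-- Nash equilibrium: no player has a profitable unilateral deviation. -/
def NE [DecidableEq V] (A : Arena k V) (O : Fin (k + 1) → Set (Play V))
    (σ : Profile k V) : Prop :=
  ∀ i, ∀ τ : Strategy V, Strategy.Valid A τ →
    Pay A O (Function.update σ i τ) i ≤ Pay A O σ i

/-- 0-fixed Nash equilibrium: no environment player (`i ≠ 0`) has a
profitable unilateral deviation. -/
def ZeroNE [DecidableEq V] (A : Arena k V) (O : Fin (k + 1) → Set (Play V))
    (σ : Profile k V) : Prop :=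
  ∀ i, i ≠ 0 → ∀ τ : Strategy V, Strategy.Valid A τ →
    Pay A O (Function.update σ i τ) i ≤ Pay A O σ i

/-- The (yes-instances of the) cooperative rational synthesis problem, with
all strategies restricted to class `C`:
`∃ σ̄. NE(σ̄) ∧ Pay₀(σ̄) ≥ μ`. -/
def CRSPAnswer [DecidableEq V] (A : Arena k V) (O : Fin (k + 1) → Set (Play V))
    (C : Strategy V → Prop) (μ : ℚ) : Prop :=
  ∃ σ : Profile k V, Profile.Valid A σ ∧ (∀ i, C (σ i)) ∧ NE A O σ ∧
    ENNReal.ofReal (μ : ℝ) ≤ Pay A O σ 0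

/-- The (yes-instances of the) non-cooperative rational synthesis problem,
with the system's strategy restricted to class `C0` and the environment
players' strategies restricted to class `Cenv`:
`∃ σ₀. ∀ σ̄₋₀. (0NE(σ̄) ⇒ Pay₀(σ̄) ≥ μ)`. -/
def NCRSPAnswer [DecidableEq V] (A : Arena k V) (O : Fin (k + 1) → Set (Play V))
    (C0 Cenv : Strategy V → Prop) (μ : ℚ) : Prop :=
  ∃ σ0 : Strategy V, Strategy.Valid A σ0 ∧ C0 σ0 ∧
    ∀ σ : Profile k V, σ 0 = σ0 → Profile.Valid A σ →
      (∀ i, i ≠ 0 → Cenv (σ i)) →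
      ZeroNE A O σ → ENNReal.ofReal (μ : ℝ) ≤ Pay A O σ 0

/-- The variant `NCRSP>` with strict payoff threshold. -/
def NCRSPgtAnswer [DecidableEq V] (A : Arena k V) (O : Fin (k + 1) → Set (Play V))
    (C0 Cenv : Strategy V → Prop) (μ : ℚ) : Prop :=
  ∃ σ0 : Strategy V, Strategy.Valid A σ0 ∧ C0 σ0 ∧
    ∀ σ : Profile k V, σ 0 = σ0 → Profile.Valid A σ →
      (∀ i, i ≠ 0 → Cenv (σ i)) →
      ZeroNE A O σ → ENNReal.ofReal (μ : ℝ) < Pay A O σ 0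

/-- The complement problem of `NCRSP>`:
`∀ σ₀. ∃ σ̄₋₀. (0NE(σ̄) ∧ Pay₀(σ̄) ≤ μ)`. -/
def CoNCRSPgtAnswer [DecidableEq V] (A : Arena k V) (O : Fin (k + 1) → Set (Play V))
    (C0 Cenv : Strategy V → Prop) (μ : ℚ) : Prop :=
  ∀ σ0 : Strategy V, Strategy.Valid A σ0 → C0 σ0 →
    ∃ σ : Profile k V, σ 0 = σ0 ∧ Profile.Valid A σ ∧
      (∀ i, i ≠ 0 → Cenv (σ i)) ∧
      ZeroNE A O σ ∧ Pay A O σ 0 ≤ ENNReal.ofReal (μ : ℝ)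

/-! ### Objectives -/

/-- Boolean formulas with variables drawn from `α`. -/
inductive BForm (α : Type) : Type
  | tru : BForm α
  | fls : BForm α
  | var : α → BForm α
  | not : BForm α → BForm α
  | and : BForm α → BForm α → BForm α
  | or : BForm α → BForm α → BForm α

namespace BForm

def holds {α : Type} (θ : α → Prop) : BForm α → Prop
  | tru => True
  | fls => False
  | var a => θ a
  | not f => ¬ holds θ f
  | and f g => holds θ f ∧ holds θ g
  | or f g => holds θ f ∨ holds θ g

def map {α β : Type} (f : α → β) : BForm α → BForm β
  | tru => tru
  | fls => fls
  | var a => var (f a)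
  | not g => not (map f g)
  | and g h => and (map f g) (map f h)
  | or g h => or (map f g) (map f h)

def subst {α β : Type} (f : α → BForm β) : BForm α → BForm β
  | tru => tru
  | fls => fls
  | var a => f a
  | not g => not (subst f g)
  | and g h => and (subst f g) (subst f h)
  | or g h => or (subst f g) (subst f h)

def bigOr {α : Type} : List (BForm α) → BForm α
  | [] => fls
  | f :: fs => or f (bigOr fs)

/-- An (arbitrary but fixed) encoding of Boolean formulas over `ℕ` into `ℕ`. -/
def toNat : BForm ℕ → ℕ
  | tru => Nat.pair 0 0
  | fls => Nat.pair 1 0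
  | var i => Nat.pair 2 i
  | not f => Nat.pair 3 (toNat f)
  | and f g => Nat.pair 4 (Nat.pair (toNat f) (toNat g))
  | or f g => Nat.pair 5 (Nat.pair (toNat f) (toNat g))

end BForm

/-- The Muller objective given by a Boolean formula over the vertices:
the set of plays `π` such that `inf(π) ⊨ φ`. -/
def mullerObj (φ : BForm V) : Set (Play V) :=
  {π | BForm.holds (· ∈ infSet π) φ}

/-- Terminal-reachability objective for a set `F` of (terminal) vertices. -/
def trObjS (F : Set V) : Set (Play V) := {π | ∃ m, π m ∈ F}

/-- Terminal-reachability objective, Boolean-valued version. -/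
def trObj (F : V → Bool) : Set (Play V) := trObjS {v | F v = true}

/-! ### End components -/

/-- `E` is an end component of the arena `A` regarded as an MDP of
player `i`: it is nonempty, strongly connected, every vertex of `E`
has a successor in `E`, and vertices not controlled by `i` have all
their successors in `E`. -/
def IsEndComponent (A : Arena k V) (i : Fin (k + 1)) (E : Set V) : Prop :=
  E.Nonempty ∧
  (∀ u ∈ E, ∀ v ∈ E,
    Relation.ReflTransGen (fun a b => a ∈ E ∧ b ∈ E ∧ b ∈ A.next a) u v) ∧
  (∀ v ∈ E, (A.next v ∩ E).Nonempty) ∧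
  (∀ v ∈ E, A.owner v ≠ some i → A.next v ⊆ E)

end NCRSPPaper

namespace NCRSPPaper

/-! ### A concrete machine model, resource-bounded classes, encodings -/

/-- A configuration of a machine with `s+1` states and tape alphabet
`Fin (a+3)` (symbol `0` is the blank, symbols `1`/`2` encode the input
bits `false`/`true`), on a one-way infinite tape. -/
structure Cfg (s a : ℕ) where
  q : Fin (s + 1)
  tape : ℕ → Fin (a + 3)
  pos : ℕ

def blankSym (a : ℕ) : Fin (a + 3) := ⟨0, by omega⟩

def bitSym (a : ℕ) (b : Bool) : Fin (a + 3) :=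
  if b then ⟨2, by omega⟩ else ⟨1, by omega⟩

def initCfg (s a : ℕ) (q0 : Fin (s + 1)) (x : List Bool) : Cfg s a :=
  ⟨q0, fun i => if h : i < x.length then bitSym a (x.get ⟨i, h⟩) else blankSym a, 0⟩

/-- The tape holds the output `y` (as bits, followed by a blank). -/
def readsOff {a : ℕ} (tape : ℕ → Fin (a + 3)) (y : List Bool) : Prop :=
  (∀ i : Fin y.length, tape (i : ℕ) = bitSym a (y.get i)) ∧
  tape y.length = blankSym a

/-- A deterministic Turing machine (one-way infinite single tape). -/
structure TM where
  states : ℕ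
  symbols : ℕ
  start : Fin (states + 1)
  accept : Fin (states + 1)
  step : Fin (states + 1) → Fin (symbols + 3) →
    Option (Fin (states + 1) × Fin (symbols + 3) × Bool)

namespace TM

def stepCfg (M : TM) (c : Cfg M.states M.symbols) : Option (Cfg M.states M.symbols) :=
  match M.step c.q (c.tape c.pos) with
  | none => none
  | some (q', a, mv) =>
      some ⟨q', Function.update c.tape c.pos a, if mv then c.pos + 1 else c.pos - 1⟩

def run (M : TM) (x : List Bool) : ℕ → Option (Cfg M.states M.symbols)
  | 0 => some (initCfg M.states M.symbols M.start x)
  | t + 1 => (M.run x t).bind M.stepCfg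

def Halted (M : TM) (c : Cfg M.states M.symbols) : Prop := M.stepCfg c = none

/-- `M` decides the language `L` (with no resource bound): on every input it
halts, and it halts in the accepting state iff the input is in `L`. -/
def Decides (M : TM) (L : Set (List Bool)) : Prop :=
  ∀ x, ∃ t c, M.run x t = some c ∧ M.Halted c ∧ (x ∈ L ↔ c.q = M.accept)

/-- `M` decides `L` within time `T` (as a function of the input length). -/
def DecidesInTime (M : TM) (L : Set (List Bool)) (T : ℕ → ℕ) : Prop :=
  ∀ x, ∃ t ≤ T x.length, ∃ c, M.run x t = some c ∧ M.Halted c ∧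
    (x ∈ L ↔ c.q = M.accept)

/-- `M` decides `L` within space `S`: it halts with the correct verdict and
never moves its head beyond cell `S(|x|)`. -/
def DecidesInSpace (M : TM) (L : Set (List Bool)) (S : ℕ → ℕ) : Prop :=
  ∀ x, (∃ t c, M.run x t = some c ∧ M.Halted c ∧ (x ∈ L ↔ c.q = M.accept)) ∧
    ∀ t c, M.run x t = some c → c.pos < S x.length

/-- `M` computes, on the encoded inputs `g x`, the encoded outputs `h x`,
within time `T`. -/
def ComputesOn {I : Type} (M : TM) (g h : I → List Bool) (T : ℕ → ℕ) : Prop :=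
  ∀ x, ∃ t ≤ T (g x).length, ∃ c, M.run (g x) t = some c ∧ M.Halted c ∧
    readsOff c.tape (h x)

/-- `M` computes the function `f` on all inputs within time `T`. -/
def ComputesInTime (M : TM) (f : List Bool → List Bool) (T : ℕ → ℕ) : Prop :=
  M.ComputesOn id f T

end TM

/-- A nondeterministic Turing machine. -/
structure NTM where
  states : ℕ
  symbols : ℕ
  start : Fin (states + 1)
  accept : Fin (states + 1)
  step : Fin (states + 1) → Fin (symbols + 3) →
    Finset (Fin (states + 1) × Fin (symbols + 3) × Bool)

namespace NTM

def stepRel (M : NTM) (c c' : Cfg M.states M.symbols) : Prop :=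
  ∃ r ∈ M.step c.q (c.tape c.pos),
    c' = ⟨r.1, Function.update c.tape c.pos r.2.1,
          if r.2.2 then c.pos + 1 else c.pos - 1⟩

/-- `M` has an accepting run on `x` staying within space `S`. -/
def AcceptsInSpace (M : NTM) (x : List Bool) (S : ℕ) : Prop :=
  ∃ (t : ℕ) (cs : ℕ → Cfg M.states M.symbols),
    cs 0 = initCfg M.states M.symbols M.start x ∧
    (∀ i < t, M.stepRel (cs i) (cs (i + 1))) ∧
    (cs t).q = M.accept ∧
    ∀ i ≤ t, (cs i).pos < S

/-- The nondeterministic machine `M` decides `L` within space `S`. -/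
def DecidesInSpace (M : NTM) (L : Set (List Bool)) (S : ℕ → ℕ) : Prop :=
  ∀ x, x ∈ L ↔ M.AcceptsInSpace x (S x.length)

end NTM

/-! #### Complexity classes -/

def In2EXPTIME (L : Set (List Bool)) : Prop :=
  ∃ (M : TM) (c : ℕ), M.DecidesInTime L (fun n => 2 ^ 2 ^ (n ^ c + c))

def In3EXPTIME (L : Set (List Bool)) : Prop :=
  ∃ (M : TM) (c : ℕ), M.DecidesInTime L (fun n => 2 ^ 2 ^ 2 ^ (n ^ c + c))

def InPSPACE (L : Set (List Bool)) : Prop :=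
  ∃ (M : TM) (c : ℕ), M.DecidesInSpace L (fun n => n ^ c + c)

def InEXPSPACE (L : Set (List Bool)) : Prop :=
  ∃ (M : TM) (c : ℕ), M.DecidesInSpace L (fun n => 2 ^ (n ^ c + c))

def InNEXPSPACE (L : Set (List Bool)) : Prop :=
  ∃ (M : NTM) (c : ℕ), M.DecidesInSpace L (fun n => 2 ^ (n ^ c + c))

/-- A language is undecidable if no machine decides it. -/
def Undecidable (L : Set (List Bool)) : Prop := ¬ ∃ M : TM, M.Decides L

def PolytimeComputable (f : List Bool → List Bool) : Prop :=
  ∃ (M : TM) (c : ℕ), M.ComputesInTime f (fun n => n ^ c + c)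

def PolytimeReducible (L L' : Set (List Bool)) : Prop :=
  ∃ f, PolytimeComputable f ∧ ∀ x, x ∈ L ↔ f x ∈ L'

def PSPACEHard (L' : Set (List Bool)) : Prop :=
  ∀ L, InPSPACE L → PolytimeReducible L L'

/-- The language of (the encodings of) the yes-instances of a decision
problem `P` on instances of type `I`, for an encoding `enc`. -/
def langOf {I : Type} (enc : I → List Bool) (P : I → Prop) : Set (List Bool) :=
  {w | ∃ x, enc x = w ∧ P x}

/-! #### Encoding of game instances -/

/-- A concrete encoding of an arena over `Fin n` as a natural number. -/
def encodeArena {k n : ℕ} (A : Arena k (Fin n)) : ℕ :=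
  Encodable.encode
    ( k, n,
      List.ofFn (fun v : Fin n => (A.owner v).map Fin.val),
      List.ofFn (fun v : Fin n => List.ofFn (fun w : Fin n => A.edge v w)),
      List.ofFn (fun v : Fin n => List.ofFn (fun w : Fin n => A.prob v w)),
      (A.init : ℕ) )

/-- An instance of NCRSP with Muller objectives: an SMG over vertices
`Fin n` with players `Fin (k+1)`, Muller objectives given by Boolean
formulas, and a threshold `μ ∈ [0,1]`. -/
structure MullerInstance where
  k : ℕ
  n : ℕ
  A : Arena k (Fin n)
  obj : Fin (k + 1) → BForm (Fin n)
  μ : ℚ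
  wf : A.WF
  hμ0 : 0 ≤ μ
  hμ1 : μ ≤ 1

def encodeMullerInstance (I : MullerInstance) : List Bool :=
  Nat.bits (Encodable.encode
    ( encodeArena I.A,
      List.ofFn (fun i => (BForm.map Fin.val (I.obj i)).toNat),
      Encodable.encode I.μ ))

/-- An instance of NCRSP with terminal-reachability objectives. -/
structure TRInstance where
  k : ℕ
  n : ℕ
  A : Arena k (Fin n)
  F : Fin (k + 1) → Fin n → Bool
  μ : ℚ
  wf : A.WF
  hterm : ∀ i v, F i v = true → A.terminal v
  hμ0 : 0 ≤ μ
  hμ1 : μ ≤ 1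

def encodeTRInstance (I : TRInstance) : List Bool :=
  Nat.bits (Encodable.encode
    ( encodeArena I.A,
      List.ofFn (fun i => List.ofFn (fun v => I.F i v)),
      Encodable.encode I.μ ))

/-- An instance of `t`-memory NCRSP with Muller objectives. -/
structure MullerTInstance where
  k : ℕ
  n : ℕ
  A : Arena k (Fin n)
  obj : Fin (k + 1) → BForm (Fin n)
  t : ℕ
  μ : ℚ
  wf : A.WF
  hμ0 : 0 ≤ μ
  hμ1 : μ ≤ 1

def encodeMullerTInstance (I : MullerTInstance) : List Bool :=
  Nat.bits (Encodable.encode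
    ( encodeArena I.A,
      List.ofFn (fun i => (BForm.map Fin.val (I.obj i)).toNat),
      I.t,
      Encodable.encode I.μ ))

/-- An instance of `t`-memory NCRSP on a non-stochastic game (NSMG,
no nature vertices) with terminal-reachability objectives. -/
structure TRTInstance where
  k : ℕ
  n : ℕ
  A : Arena k (Fin n)
  F : Fin (k + 1) → Fin n → Bool
  t : ℕ
  μ : ℚ
  wf : A.WF
  nonature : ∀ v, A.owner v ≠ none
  hterm : ∀ i v, F i v = true → A.terminal v
  hμ0 : 0 ≤ μ
  hμ1 : μ ≤ 1

def encodeTRTInstance (I : TRTInstance) : List Bool :=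
  Nat.bits (Encodable.encode
    ( encodeArena I.A,
      List.ofFn (fun i => List.ofFn (fun v => I.F i v)),
      I.t,
      Encodable.encode I.μ ))

end NCRSPPaper

namespace NCRSPPaper

/-! ### First-order logic over the ordered field of real numbers -/

/-- Terms over the signature `(+, ×, 0, 1)`, with de Bruijn variables. -/
inductive RTerm : Type
  | var : ℕ → RTerm
  | zero : RTerm
  | one : RTerm
  | add : RTerm → RTerm → RTerm
  | mul : RTerm → RTerm → RTerm

namespace RTerm

noncomputable def eval (ρ : ℕ → ℝ) : RTerm → ℝ
  | var i => ρ i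
  | zero => 0
  | one => 1
  | add s t => eval ρ s + eval ρ t
  | mul s t => eval ρ s * eval ρ t

def toNat : RTerm → ℕ
  | var i => Nat.pair 0 i
  | zero => Nat.pair 1 0
  | one => Nat.pair 2 0
  | add s t => Nat.pair 3 (Nat.pair (toNat s) (toNat t))
  | mul s t => Nat.pair 4 (Nat.pair (toNat s) (toNat t))

end RTerm

/-- First-order formulas over the signature `(+, ×, 0, 1, ≤)`, with de
Bruijn variables. -/
inductive RForm : Type
  | le : RTerm → RTerm → RForm
  | not : RForm → RForm
  | and : RForm → RForm → RForm
  | or : RForm → RForm → RForm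
  | ex : RForm → RForm
  | all : RForm → RForm

namespace RForm

/-- Satisfaction in the structure `(ℝ, +, ×, 0, 1, ≤)`. -/
def holds : (ℕ → ℝ) → RForm → Prop
  | ρ, le s t => RTerm.eval ρ s ≤ RTerm.eval ρ t
  | ρ, not f => ¬ holds ρ f
  | ρ, and f g => holds ρ f ∧ holds ρ g
  | ρ, or f g => holds ρ f ∨ holds ρ g
  | ρ, ex f => ∃ x : ℝ, holds (fun i => match i with | 0 => x | j + 1 => ρ j) f
  | ρ, all f => ∀ x : ℝ, holds (fun i => match i with | 0 => x | j + 1 => ρ j) f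

/-- Validity (truth in `(ℝ, +, ×, 0, 1, ≤)` under every assignment;
for sentences this is just truth). -/
def valid (f : RForm) : Prop := ∀ ρ, holds ρ f

/-- Quantifier-free formulas. -/
def QFree : RForm → Prop
  | le _ _ => True
  | not f => QFree f
  | and f g => QFree f ∧ QFree g
  | or f g => QFree f ∧ QFree g
  | ex _ => False
  | all _ => False

/-- Existential formulas: a block of existential quantifiers applied to a
quantifier-free formula (prenex form with only existential quantifiers). -/
inductive IsExistential : RForm → Prop
  | qf {f : RForm} : QFree f → IsExistential f
  | ex {f : RForm} : IsExistential f → IsExistential (RForm.ex f)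

def toNat : RForm → ℕ
  | le s t => Nat.pair 0 (Nat.pair s.toNat t.toNat)
  | not f => Nat.pair 1 (toNat f)
  | and f g => Nat.pair 2 (Nat.pair (toNat f) (toNat g))
  | or f g => Nat.pair 3 (Nat.pair (toNat f) (toNat g))
  | ex f => Nat.pair 4 (toNat f)
  | all f => Nat.pair 5 (toNat f)

end RForm

def encodeRForm (f : RForm) : List Bool := Nat.bits f.toNat

/-! ### Quantified Boolean formulas -/

/-- Truth of a prenex QBF: `qs` is the (outermost-first) list of
quantifiers (`true` = `∀`, `false` = `∃`); the quantifier at the head of a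
suffix of length `j+1` binds variable `j`. -/
def qbfHolds (φ : BForm ℕ) : List Bool → (ℕ → Bool) → Prop
  | [], ρ => BForm.holds (fun i => ρ i = true) φ
  | q :: qs, ρ =>
      if q then ∀ b : Bool, qbfHolds φ qs (Function.update ρ qs.length b)
      else ∃ b : Bool, qbfHolds φ qs (Function.update ρ qs.length b)

/-- Variables of a Boolean formula are `< m`. -/
def BForm.varsLT (m : ℕ) : BForm ℕ → Prop
  | BForm.tru => True
  | BForm.fls => True
  | BForm.var i => i < m
  | BForm.not f => f.varsLT m
  | BForm.and f g => f.varsLT m ∧ g.varsLT m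
  | BForm.or f g => f.varsLT m ∧ g.varsLT m

/-- A prenex quantified Boolean formula with `quants.length` variables. -/
structure QBFInst where
  quants : List Bool
  matrix : BForm ℕ
  wf : matrix.varsLT quants.length

def QBFInst.IsTrue (Q : QBFInst) : Prop :=
  qbfHolds Q.matrix Q.quants (fun _ => false)

def encodeQBFInst (Q : QBFInst) : List Bool :=
  Nat.bits (Encodable.encode (Q.quants, Q.matrix.toNat))

end NCRSPPaper

namespace NCRSPPaper

/-! ### The unfolded game of Statement 16 -/

/-- The vertex set of the unfolded game: words over `V` of length at most
`t+1` (each recording the length-`≤ t` suffix of the history preceding the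
current vertex, followed by the current vertex). -/
abbrev UnfV (V : Type) (t : ℕ) : Type := {l : List V // l.length ≤ t + 1}

/-- The word reached from the word `w` when the play moves to `u`. -/
def succWord {V : Type} (t : ℕ) (w : List V) (u : V) : List V :=
  if w.length ≤ t then w ++ [u] else (w.drop 1) ++ [u]

/-- The unfolding of an arena with memory bound `t`: vertices are words,
a word is owned by the owner of its last letter, and transitions
`(xv, p, xvw)` for `|x| < t` resp. `(xv, p, x[1:]vw)` for `|x| = t` mimic
the transitions `(v, p, w)` of the original arena.  (Words not arising as
histories, such as the empty word, are unreachable; they are given a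
self-loop so that the arena stays well-formed.) -/
def unfoldArena {k : ℕ} {V : Type} [DecidableEq V] (A : Arena k V) (t : ℕ) :
    Arena k (UnfV V t) where
  owner w :=
    match w.val.getLast? with
    | some v => A.owner v
    | none => some 0
  edge w w' :=
    match w.val.getLast?, w'.val.getLast? with
    | some v, some u => A.edge v u && decide (w'.val = succWord t w.val u)
    | none, none => true
    | _, _ => false
  prob w w' :=
    match w.val.getLast?, w'.val.getLast? with
    | some v, some u => if w'.val = succWord t w.val u then A.prob v u else 0
    | _, _ => 0
  init := ⟨[A.init], by simp⟩

/-- All words over `Fin n` of length exactly `j`. -/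
def allListsLen (n : ℕ) : ℕ → List (List (Fin n))
  | 0 => [[]]
  | j + 1 => (List.finRange n).flatMap fun a => (allListsLen n j).map (a :: ·)

/-- All words over `Fin n` of length at most `t`. -/
def wordsUpTo (n t : ℕ) : List (List (Fin n)) :=
  (List.range (t + 1)).flatMap (allListsLen n)

/-- The Muller formula of the unfolded game: each variable `v` is replaced
by the disjunction of all its history-annotated copies `xv` with `|x| ≤ t`. -/
def unfoldForm {n : ℕ} (t : ℕ) (φ : BForm (Fin n)) : BForm (UnfV (Fin n) t) :=
  φ.subst fun v =>
    BForm.bigOr <| (wordsUpTo n t).filterMap fun x =>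
      if h : (x ++ [v]).length ≤ t + 1 then some (BForm.var ⟨x ++ [v], h⟩)
      else none


/-! A vertex `x v` of the unfolded arena stores, besides the current vertex `v`, the window `x`
of the last `t` vertices before it. Histories of `G` therefore lift injectively to histories of
`G'`, and a strategy of `G'` folds back to one of `G` by reading it on the lifted history; the
positional strategies of `G'` fold to exactly the pure `t`-memory strategies of `G`.
Lifting preserves the probability of every finite history, and the histories of `G'` that are not
lifts have probability zero, so the cylinder outer measures of a profile of `G'` and of its fold
agree on corresponding sets of plays. A play meets a Muller objective iff its lift meets the
unfolded one, since a vertex is visited infinitely often iff one of its finitely many annotated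
copies is; hence corresponding profiles have equal payoffs. A deviation in `G` lifts to a
history-dependent deviation in `G'`, so 0-fixed Nash equilibria correspond as well. -/

namespace BForm

variable {α β : Type}

theorem holds_congr {θ θ' : α → Prop} (h : ∀ a, θ a ↔ θ' a) :
    ∀ φ : BForm α, φ.holds θ ↔ φ.holds θ'
  | tru | fls => Iff.rfl
  | var a => h a
  | not f => not_congr (holds_congr h f)
  | and f g => and_congr (holds_congr h f) (holds_congr h g)
  | or f g => or_congr (holds_congr h f) (holds_congr h g)

theorem holds_subst (θ : β → Prop) (f : α → BForm β) :
    ∀ φ : BForm α, (φ.subst f).holds θ ↔ φ.holds fun a => (f a).holds θ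
  | tru | fls | var _ => Iff.rfl
  | not g => not_congr (holds_subst θ f g)
  | and g h => and_congr (holds_subst θ f g) (holds_subst θ f h)
  | or g h => or_congr (holds_subst θ f g) (holds_subst θ f h)

theorem holds_bigOr (θ : α → Prop) (L : List (BForm α)) :
    (bigOr L).holds θ ↔ ∃ ψ ∈ L, ψ.holds θ := by
  induction L with
  | nil => simp [bigOr, holds]
  | cons ψ L ih => simp [bigOr, holds, ih]

end BForm

theorem mem_allListsLen {n : ℕ} :
    ∀ {j : ℕ} {l : List (Fin n)}, l ∈ allListsLen n j ↔ l.length = j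
  | 0, l => by cases l <;> simp [allListsLen]
  | j + 1, [] => by simp [allListsLen]
  | j + 1, a :: l => by simp [allListsLen, mem_allListsLen]

theorem mem_wordsUpTo {n t : ℕ} {l : List (Fin n)} : l ∈ wordsUpTo n t ↔ l.length ≤ t := by
  simp only [wordsUpTo, List.mem_flatMap, List.mem_range, mem_allListsLen]
  constructor
  · rintro ⟨j, hj, rfl⟩; omega
  · intro h; exact ⟨l.length, by omega, rfl⟩

theorem holds_unfoldForm {n t : ℕ} (θ : UnfV (Fin n) t → Prop) (φ : BForm (Fin n)) :
    (unfoldForm t φ).holds θ ↔ φ.holds fun v => ∃ w, θ w ∧ w.val.getLast? = some v := by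
  refine (BForm.holds_subst _ _ φ).trans (BForm.holds_congr (fun v => ?_) φ)
  rw [BForm.holds_bigOr]
  constructor
  · rintro ⟨ψ, hψ, hθ⟩
    obtain ⟨x, -, hx⟩ := List.mem_filterMap.1 hψ
    split at hx
    · cases hx
      exact ⟨_, hθ, List.getLast?_concat⟩
    · cases hx
  · rintro ⟨⟨w, hw⟩, hθ, hlast⟩
    obtain ⟨x, rfl⟩ := List.getLast?_eq_some_iff.1 hlast
    refine ⟨.var ⟨x ++ [v], hw⟩, List.mem_filterMap.2 ⟨x, ?_, dif_pos hw⟩, hθ⟩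
    rw [mem_wordsUpTo]
    simpa using hw

theorem UnfV.getElem?_injective {V : Type} (t : ℕ) :
    Function.Injective fun (w : UnfV V t) (j : Fin (t + 1)) => w.val[j.val]? := by
  intro w w' h
  refine Subtype.ext (List.ext_getElem? fun i => ?_)
  by_cases hi : i < t + 1
  · exact congrFun h ⟨i, hi⟩
  · rw [List.getElem?_eq_none (by have := w.2; omega),
      List.getElem?_eq_none (by have := w'.2; omega)]

instance {V : Type} [Finite V] (t : ℕ) : Finite (UnfV V t) :=
  Finite.of_injective _ (UnfV.getElem?_injective t)

theorem card_UnfV_le (V : Type) [Finite V] (t : ℕ) :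
    Nat.card (UnfV V t) ≤ (Nat.card V + 1) ^ (t + 1) := by
  calc Nat.card (UnfV V t) ≤ Nat.card (Fin (t + 1) → Option V) :=
        Nat.card_le_card_of_injective _ (UnfV.getElem?_injective t)
    _ = (Nat.card V + 1) ^ (t + 1) := by simp [Nat.card_fun]

section Unfolding

variable {V : Type} {t : ℕ}

theorem length_succWord_le {w : List V} (hw : w.length ≤ t + 1) (u : V) :
    (succWord t w u).length ≤ t + 1 := by
  unfold succWord; split <;> simp <;> omega

variable (t) in
def unfoldVertex (h : List V) (u : V) : UnfV V t :=
  ⟨h.drop (h.length - t) ++ [u], by simp; omega⟩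

def UnfV.step (w : UnfV V t) (u : V) : UnfV V t :=
  ⟨succWord t w.val u, length_succWord_le w.2 u⟩

/-- `v₀` is a junk value for the empty word, which no play of the unfolded arena visits. -/
def UnfV.last (v₀ : V) (w : UnfV V t) : V := w.val.getLast?.getD v₀

theorem getLast?_unfoldVertex (h : List V) (u : V) :
    (unfoldVertex t h u).val.getLast? = some u := List.getLast?_concat

theorem getLast?_succWord (w : List V) (u : V) : (succWord t w u).getLast? = some u := by
  unfold succWord; split <;> exact List.getLast?_concat

theorem UnfV.getLast?_step (w : UnfV V t) (u : V) : (w.step u).val.getLast? = some u :=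
  getLast?_succWord w.val u

theorem UnfV.last_eq_of_getLast? {v₀ u : V} {w : UnfV V t} (hw : w.val.getLast? = some u) :
    w.last v₀ = u := by
  rw [UnfV.last, hw]; rfl

theorem UnfV.getLast?_eq_some_last (v₀ : V) {w : UnfV V t} (hw : w.val ≠ []) :
    w.val.getLast? = some (w.last v₀) := by
  rw [UnfV.last, List.getLast?_eq_some_getLast hw, Option.getD_some]

theorem last_unfoldVertex (v₀ : V) (h : List V) (u : V) : (unfoldVertex t h u).last v₀ = u :=
  UnfV.last_eq_of_getLast? (getLast?_unfoldVertex h u)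

theorem UnfV.last_step (v₀ : V) (w : UnfV V t) (u : V) : (w.step u).last v₀ = u :=
  UnfV.last_eq_of_getLast? (w.getLast?_step u)

theorem unfoldVertex_drop (h : List V) (u : V) :
    unfoldVertex t (h.drop (h.length - t)) u = unfoldVertex t h u := by
  apply Subtype.ext
  simp only [unfoldVertex, List.length_drop]
  rw [show h.length - (h.length - t) - t = 0 by omega, List.drop_zero]

theorem unfoldVertex_append_singleton (h : List V) (u v : V) :
    unfoldVertex t (h ++ [u]) v = (unfoldVertex t h u).step v := by
  apply Subtype.ext
  simp only [unfoldVertex, UnfV.step, succWord, List.length_append, List.length_singleton,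
    List.length_drop]
  split
  · rw [show h.length + 1 - t = 0 by omega, show h.length - t = 0 by omega]
    simp
  · rw [List.drop_append, List.drop_append, List.drop_drop, List.length_drop]
    congr 3 <;> omega

theorem unfoldVertex_dropLast_last (v₀ : V) {w : UnfV V t} (hw : w.val ≠ []) :
    unfoldVertex t w.val.dropLast (w.last v₀) = w := by
  apply Subtype.ext
  have := w.2
  simp only [unfoldVertex, List.length_dropLast]
  rw [show w.val.length - 1 - t = 0 by omega, List.drop_zero, UnfV.last,
    List.getLast?_eq_some_getLast hw, Option.getD_some, List.dropLast_append_getLast]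

theorem dropLast_unfoldVertex (h : List V) (u : V) :
    (unfoldVertex t h u).val.dropLast = h.drop (h.length - t) := List.dropLast_concat

variable (t) in
def unfoldHist : List V → List V → List (UnfV V t)
  | _, [] => []
  | pre, u :: rest => unfoldVertex t pre u :: unfoldHist (pre ++ [u]) rest

theorem unfoldHist_append_singleton (w : List V) :
    ∀ (pre : List V) (v : V),
      unfoldHist t pre (w ++ [v]) = unfoldHist t pre w ++ [unfoldVertex t (pre ++ w) v] := by
  induction w with
  | nil => intro pre v; simp [unfoldHist]
  | cons u w ih =>
    intro pre v
    simp [unfoldHist, ih (pre ++ [u]) v]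

theorem unfoldHist_nil_append_singleton (h : List V) (v : V) :
    unfoldHist t [] (h ++ [v]) = unfoldHist t [] h ++ [unfoldVertex t h v] := by
  simpa using unfoldHist_append_singleton h [] v

theorem length_unfoldHist : ∀ (pre w : List V), (unfoldHist t pre w).length = w.length
  | _, [] => rfl
  | pre, u :: w => by simp [unfoldHist, length_unfoldHist _ w]

theorem map_last_unfoldHist (v₀ : V) : ∀ (pre w : List V),
    (unfoldHist t pre w).map (UnfV.last v₀) = w
  | _, [] => rfl
  | pre, u :: w => by simp [unfoldHist, map_last_unfoldHist v₀ _ w, last_unfoldVertex]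

theorem unfoldHist_injective (pre : List V) : Function.Injective (unfoldHist t pre) := by
  cases isEmpty_or_nonempty V with
  | inl _ => intro w w' _; cases w <;> cases w' <;> first | rfl | exact isEmptyElim ‹V›
  | inr h =>
    obtain ⟨v₀⟩ := h
    exact Function.LeftInverse.injective (g := List.map (UnfV.last v₀))
      (map_last_unfoldHist v₀ pre)

def Play.take (π : Play V) (L : ℕ) : List V := (List.range L).map π

theorem Play.length_take (π : Play V) (L : ℕ) : (π.take L).length = L := by
  simp [Play.take]

theorem Play.take_succ (π : Play V) (L : ℕ) : π.take (L + 1) = π.take L ++ [π L] := by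
  simp [Play.take, List.range_succ]

theorem Play.map_take {W : Type} (f : V → W) (π : Play V) (L : ℕ) :
    (π.take L).map f = Play.take (f ∘ π) L := by
  simp [Play.take, List.map_map]

theorem Play.ext_take {π π' : Play V} (h : ∀ L, π.take L = π'.take L) : π = π' := by
  funext j
  simpa [Play.take_succ] using congrArg List.getLast? (h (j + 1))

theorem mem_cyl_iff_take_eq (π : Play V) (w : List V) : π ∈ cyl w ↔ π.take w.length = w := by
  constructor
  · intro h
    exact List.ext_getElem (Play.length_take π _) fun i _ hi => by
      simpa [Play.take] using h i hi
  · intro h i hi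
    rw [List.get_of_eq h.symm]
    simp [Play.take]

variable (t) in
def unfoldPlay (π : Play V) : Play (UnfV V t) :=
  fun j => unfoldVertex t (π.take j) (π j)

theorem unfoldHist_take (π : Play V) :
    ∀ L, unfoldHist t [] (π.take L) = (unfoldPlay t π).take L
  | 0 => rfl
  | L + 1 => by
    rw [Play.take_succ, unfoldHist_nil_append_singleton, unfoldHist_take π L, Play.take_succ]
    rfl

theorem eq_unfoldPlay_of_forall_take (v₀ : V) {π' : Play (UnfV V t)}
    (h : ∀ L, ∃ w, π'.take L = unfoldHist t [] w) :
    π' = unfoldPlay t (UnfV.last v₀ ∘ π') := by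
  refine Play.ext_take fun L => ?_
  obtain ⟨w, hw⟩ := h L
  have hw' := congrArg (List.map (UnfV.last v₀)) hw
  rw [Play.map_take, map_last_unfoldHist] at hw'
  rw [hw, ← unfoldHist_take, hw']

end Unfolding

theorem PMF.map_congr_support {α β : Type} {p : PMF α} {f g : α → β}
    (h : ∀ a ∈ p.support, f a = g a) : p.map f = p.map g := by
  ext b
  simp only [PMF.map_apply]
  refine tsum_congr fun a => ?_
  by_cases ha : p a = 0
  · simp [ha]
  · rw [h a ha]

theorem PMF.eq_pure_of_support_subset {α : Type} {p : PMF α} {a : α} (h : p.support ⊆ {a}) :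
    p = PMF.pure a := by
  refine (PMF.map_id p).symm.trans ?_
  rw [PMF.map_congr_support (f := id) (g := Function.const α a) fun x hx => h hx, PMF.map_const]

theorem PMF.map_apply_of_injOn {α β : Type} (p : PMF α) (f : α → β) {a : α}
    (h : ∀ a' ∈ p.support, f a' = f a → a' = a) : p.map f (f a) = p a := by
  rw [PMF.map_apply, tsum_eq_single a, if_pos rfl]
  intro a' ha'
  split_ifs with hf
  · by_contra hp
    exact ha' (h a' hp hf.symm)
  · rfl

theorem PMF.map_apply_eq_one {α β : Type} {p : PMF α} (f : α → β) {a : α} (h : p a = 1) :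
    p.map f (f a) = 1 := by
  rw [PMF.apply_eq_one_iff] at h ⊢
  rw [PMF.support_map, h, Set.image_singleton]

section UnfoldArena

variable {k : ℕ} {V : Type} [DecidableEq V] (A : Arena k V) {t : ℕ}

theorem owner_unfoldArena {w : UnfV V t} {u : V} (hw : w.val.getLast? = some u) :
    (unfoldArena A t).owner w = A.owner u := by
  simp only [unfoldArena, hw]

theorem mem_next_unfoldArena {w w' : UnfV V t} {u : V} (hw : w.val.getLast? = some u) :
    w' ∈ (unfoldArena A t).next w ↔ ∃ v ∈ A.next u, w' = w.step v := by
  simp only [Arena.next, Set.mem_ofPred_eq, owner_unfoldArena A hw]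
  constructor
  · rintro (⟨ho, hp⟩ | ⟨ho, he⟩)
    · cases hw' : w'.val.getLast? with
      | none => simp [unfoldArena, hw, hw'] at hp
      | some v =>
        simp only [unfoldArena, hw, hw'] at hp
        split_ifs at hp with hc
        · exact ⟨v, Or.inl ⟨ho, hp⟩, Subtype.ext hc⟩
        · exact absurd hp (lt_irrefl 0)
    · cases hw' : w'.val.getLast? with
      | none => simp [unfoldArena, hw, hw'] at he
      | some v =>
        simp only [unfoldArena, hw, hw', Bool.and_eq_true, decide_eq_true_eq] at he
        exact ⟨v, Or.inr ⟨ho, he.1⟩, Subtype.ext he.2⟩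
  · rintro ⟨v, hv | hv, rfl⟩
    · refine Or.inl ⟨hv.1, ?_⟩
      simpa [unfoldArena, hw, getLast?_succWord, UnfV.step] using hv.2
    · refine Or.inr ⟨hv.1, ?_⟩
      simpa [unfoldArena, hw, getLast?_succWord, UnfV.step] using hv.2

theorem next_unfoldArena_of_eq_nil {w : UnfV V t} (hw : w.val = []) :
    (unfoldArena A t).next w = {w} := by
  ext w'
  simp only [Arena.next, unfoldArena, hw, List.getLast?_nil, Set.mem_ofPred_eq,
    Set.mem_singleton_iff]
  cases hw' : w'.val.getLast? with
  | some v =>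
    have : w'.val ≠ [] := fun h => by simp [h] at hw'
    simp [Subtype.ext_iff, hw, this]
  | none => simp [Subtype.ext_iff, hw, List.getLast?_eq_none_iff.1 hw']

end UnfoldArena

section StrategyMaps

variable {k : ℕ} {V : Type} {t : ℕ}

variable (t) in
noncomputable def foldStrategy (v₀ : V) (σ' : Strategy (UnfV V t)) : Strategy V :=
  fun h u => (σ' (unfoldHist t [] h) (unfoldVertex t h u)).map (UnfV.last v₀)

variable (t) in
/-- `τ` is consulted with the history `mem h' w`: the `t`-window stored in `w` for
`positionalLift`, the whole projected history `h'` for `historyLift`. -/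
noncomputable def liftStrategy (v₀ : V) (mem : List (UnfV V t) → UnfV V t → List V)
    (τ : Strategy V) : Strategy (UnfV V t) :=
  fun h' w => if w.val = [] then PMF.pure w else (τ (mem h' w) (w.last v₀)).map w.step

variable (t) in
noncomputable def positionalLift (v₀ : V) : Strategy V → Strategy (UnfV V t) :=
  liftStrategy t v₀ fun _ w => w.val.dropLast

variable (t) in
noncomputable def historyLift (v₀ : V) : Strategy V → Strategy (UnfV V t) :=
  liftStrategy t v₀ fun h' _ => h'.map (UnfV.last v₀)

theorem liftStrategy_unfoldVertex (v₀ : V) (mem : List (UnfV V t) → UnfV V t → List V)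
    (τ : Strategy V) (h' : List (UnfV V t)) (h : List V) (u : V) :
    liftStrategy t v₀ mem τ h' (unfoldVertex t h u)
      = (τ (mem h' (unfoldVertex t h u)) u).map (unfoldVertex t h u).step := by
  rw [liftStrategy, if_neg (by simp [unfoldVertex]), last_unfoldVertex]

theorem foldStrategy_liftStrategy (v₀ : V) (mem : List (UnfV V t) → UnfV V t → List V)
    (τ : Strategy V) (h : List V) (u : V) :
    foldStrategy t v₀ (liftStrategy t v₀ mem τ) h u
      = τ (mem (unfoldHist t [] h) (unfoldVertex t h u)) u := by
  rw [foldStrategy, liftStrategy_unfoldVertex, PMF.map_comp,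
    show UnfV.last v₀ ∘ (unfoldVertex t h u).step = id from funext (UnfV.last_step v₀ _),
    PMF.map_id]

theorem foldStrategy_historyLift (v₀ : V) (τ : Strategy V) :
    foldStrategy t v₀ (historyLift t v₀ τ) = τ := by
  funext h u
  rw [historyLift, foldStrategy_liftStrategy, map_last_unfoldHist]

theorem foldStrategy_positionalLift (v₀ : V) {τ : Strategy V} (hτ : Strategy.TMemory t τ) :
    foldStrategy t v₀ (positionalLift t v₀ τ) = τ := by
  funext h u
  rw [positionalLift, foldStrategy_liftStrategy, dropLast_unfoldVertex, ← hτ]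

theorem positionalLift_foldStrategy [DecidableEq V] (A : Arena k V) {σ' : Strategy (UnfV V t)}
    (hs : Strategy.Stationary σ') (hv : Strategy.Valid (unfoldArena A t) σ') :
    positionalLift t A.init (foldStrategy t A.init σ') = σ' := by
  funext h' w
  by_cases hw : w.val = []
  · rw [positionalLift, liftStrategy, if_pos hw]
    refine (PMF.eq_pure_of_support_subset fun b hb => ?_).symm
    rw [← next_unfoldArena_of_eq_nil A hw]
    exact hv h' w b hb
  · rw [positionalLift, liftStrategy, if_neg hw, foldStrategy,
      unfoldVertex_dropLast_last _ hw, hs _ h' w, PMF.map_comp]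
    refine (PMF.map_congr_support fun a ha => ?_).trans (PMF.map_id _)
    obtain ⟨v, -, rfl⟩ :=
      (mem_next_unfoldArena A (w.getLast?_eq_some_last A.init hw)).1 (hv h' w a ha)
    simp only [Function.comp_apply, UnfV.last_step, id]

theorem liftStrategy_valid [DecidableEq V] (A : Arena k V)
    (mem : List (UnfV V t) → UnfV V t → List V) {τ : Strategy V} (hτ : Strategy.Valid A τ) :
    Strategy.Valid (unfoldArena A t) (liftStrategy t A.init mem τ) := by
  intro h' w b hb
  by_cases hw : w.val = []
  · rw [liftStrategy, if_pos hw, ← PMF.mem_support_iff, PMF.mem_support_pure_iff] at hb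
    rw [next_unfoldArena_of_eq_nil A hw, hb]
    rfl
  · rw [liftStrategy, if_neg hw, ← PMF.mem_support_iff, PMF.mem_support_map_iff] at hb
    obtain ⟨a, ha, rfl⟩ := hb
    exact (mem_next_unfoldArena A (w.getLast?_eq_some_last A.init hw)).2 ⟨a, hτ _ _ _ ha, rfl⟩

theorem liftStrategy_pure (v₀ : V) (mem : List (UnfV V t) → UnfV V t → List V)
    {τ : Strategy V} (hτ : Strategy.Pure τ) : Strategy.Pure (liftStrategy t v₀ mem τ) := by
  intro h' w
  by_cases hw : w.val = []
  · exact ⟨w, by rw [liftStrategy, if_pos hw, PMF.pure_apply_self]⟩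
  · obtain ⟨v, hv⟩ := hτ (mem h' w) (w.last v₀)
    exact ⟨w.step v, by rw [liftStrategy, if_neg hw]; exact PMF.map_apply_eq_one _ hv⟩

theorem positionalLift_positional (v₀ : V) {τ : Strategy V} (hτ : Strategy.Pure τ) :
    Strategy.Positional (positionalLift t v₀ τ) :=
  ⟨fun _ _ _ => rfl, liftStrategy_pure v₀ _ hτ⟩

theorem foldStrategy_pure (v₀ : V) {σ' : Strategy (UnfV V t)} (hσ : Strategy.Pure σ') :
    Strategy.Pure (foldStrategy t v₀ σ') := by
  intro h u
  obtain ⟨w, hw⟩ := hσ (unfoldHist t [] h) (unfoldVertex t h u)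
  exact ⟨w.last v₀, PMF.map_apply_eq_one _ hw⟩

theorem foldStrategy_tMemory (v₀ : V) {σ' : Strategy (UnfV V t)}
    (hσ : Strategy.Stationary σ') : Strategy.TMemory t (foldStrategy t v₀ σ') := by
  intro h u
  rw [foldStrategy, foldStrategy, unfoldVertex_drop, hσ (unfoldHist t [] h)]

theorem foldStrategy_valid [DecidableEq V] (A : Arena k V) {σ' : Strategy (UnfV V t)}
    (hσ : Strategy.Valid (unfoldArena A t) σ') :
    Strategy.Valid A (foldStrategy t A.init σ') := by
  intro h u v hv
  rw [foldStrategy, ← PMF.mem_support_iff, PMF.mem_support_map_iff] at hv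
  obtain ⟨a, ha, rfl⟩ := hv
  obtain ⟨v', hv', rfl⟩ := (mem_next_unfoldArena A (getLast?_unfoldVertex h u)).1 (hσ _ _ _ ha)
  rwa [UnfV.last_step]

end StrategyMaps

section ProbabilityTransfer

variable {k : ℕ} {V : Type}

theorem Arena.mem_next_of_stepProb_ne_zero {A : Arena k V} {σ : Profile k V}
    (hσ : Profile.Valid A σ) {h : List V} {u v : V} (hne : A.stepProb σ h u v ≠ 0) :
    v ∈ A.next u := by
  unfold Arena.stepProb at hne
  cases ho : A.owner u with
  | none => rw [ho] at hne; exact Or.inl ⟨ho, by simpa using hne⟩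
  | some i => rw [ho] at hne; exact hσ i h u v hne

variable [DecidableEq V] (A : Arena k V) {t : ℕ} {σ' : Profile k (UnfV V t)}

theorem init_unfoldArena : (unfoldArena A t).init = unfoldVertex t [] A.init :=
  Subtype.ext (by simp [unfoldArena, unfoldVertex])

theorem prob_unfoldArena_step {w : UnfV V t} {u : V} (hw : w.val.getLast? = some u) (v : V) :
    (unfoldArena A t).prob w (w.step v) = A.prob u v := by
  simp [unfoldArena, hw, getLast?_succWord, UnfV.step]

theorem stepProb_foldStrategy (hσ' : Profile.Valid (unfoldArena A t) σ') (h : List V) (u v : V) :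
    A.stepProb (foldStrategy t A.init ∘ σ') h u v
      = (unfoldArena A t).stepProb σ' (unfoldHist t [] h) (unfoldVertex t h u)
          (unfoldVertex t (h ++ [u]) v) := by
  have hlast := getLast?_unfoldVertex (t := t) h u
  simp only [Arena.stepProb, owner_unfoldArena A hlast, unfoldVertex_append_singleton]
  cases A.owner u with
  | none => rw [prob_unfoldArena_step A hlast]
  | some i =>
    dsimp only
    have hinj : ∀ a ∈ (σ' i (unfoldHist t [] h) (unfoldVertex t h u)).support,
        a.last A.init = ((unfoldVertex t h u).step v).last A.init →
          a = (unfoldVertex t h u).step v := by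
      intro a ha hl
      obtain ⟨v', -, rfl⟩ := (mem_next_unfoldArena A hlast).1 (hσ' i _ _ _ ha)
      rw [UnfV.last_step, UnfV.last_step] at hl
      rw [hl]
    rw [← PMF.map_apply_of_injOn _ _ hinj, UnfV.last_step, Function.comp_apply, foldStrategy]

theorem exists_eq_unfoldVertex_of_stepProb_ne_zero (hσ' : Profile.Valid (unfoldArena A t) σ')
    {h' : List (UnfV V t)} {h : List V} {u : V} {w : UnfV V t}
    (hne : (unfoldArena A t).stepProb σ' h' (unfoldVertex t h u) w ≠ 0) :
    ∃ v, w = unfoldVertex t (h ++ [u]) v := by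
  obtain ⟨v, -, rfl⟩ := (mem_next_unfoldArena A (getLast?_unfoldVertex h u)).1
    (Arena.mem_next_of_stepProb_ne_zero hσ' hne)
  exact ⟨v, (unfoldVertex_append_singleton h u v).symm⟩

theorem extProb_foldStrategy (hσ' : Profile.Valid (unfoldArena A t) σ') :
    ∀ (rest h : List V) (u : V),
      extProb A (foldStrategy t A.init ∘ σ') h u rest
        = extProb (unfoldArena A t) σ' (unfoldHist t [] h) (unfoldVertex t h u)
            (unfoldHist t (h ++ [u]) rest)
  | [], _, _ => rfl
  | v :: rest, h, u => by
    rw [unfoldHist, extProb, extProb, stepProb_foldStrategy A hσ', extProb_foldStrategy hσ' rest,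
      unfoldHist_nil_append_singleton]

theorem exists_unfoldHist_of_extProb_ne_zero (hσ' : Profile.Valid (unfoldArena A t) σ') :
    ∀ (rest' : List (UnfV V t)) (h : List V) (u : V),
      extProb (unfoldArena A t) σ' (unfoldHist t [] h) (unfoldVertex t h u) rest' ≠ 0 →
        ∃ rest, rest' = unfoldHist t (h ++ [u]) rest
  | [], _, _, _ => ⟨[], rfl⟩
  | w :: rest', h, u, hne => by
    rw [extProb, mul_ne_zero_iff] at hne
    obtain ⟨v, rfl⟩ := exists_eq_unfoldVertex_of_stepProb_ne_zero A hσ' hne.1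
    rw [← unfoldHist_nil_append_singleton] at hne
    obtain ⟨rest, rfl⟩ := exists_unfoldHist_of_extProb_ne_zero hσ' rest' _ _ hne.2
    exact ⟨v :: rest, rfl⟩

theorem wordProbFrom_foldStrategy (hσ' : Profile.Valid (unfoldArena A t) σ') (w : List V) :
    wordProbFrom A (foldStrategy t A.init ∘ σ') A.init w
      = wordProbFrom (unfoldArena A t) σ' (unfoldArena A t).init (unfoldHist t [] w) := by
  cases w with
  | nil => rfl
  | cons v rest =>
    have hinj : unfoldVertex t [] v = unfoldVertex t [] A.init ↔ v = A.init :=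
      ⟨fun h => by simpa [last_unfoldVertex] using congrArg (UnfV.last A.init) h, congrArg _⟩
    simp only [wordProbFrom, unfoldHist, init_unfoldArena, hinj, extProb_foldStrategy A hσ']

theorem exists_unfoldHist_of_wordProbFrom_ne_zero (hσ' : Profile.Valid (unfoldArena A t) σ')
    {w' : List (UnfV V t)}
    (hne : wordProbFrom (unfoldArena A t) σ' (unfoldArena A t).init w' ≠ 0) :
    ∃ w, w' = unfoldHist t [] w := by
  cases w' with
  | nil => exact ⟨[], rfl⟩
  | cons w r' =>
    rw [wordProbFrom, mul_ne_zero_iff] at hne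
    obtain rfl : w = (unfoldArena A t).init := by
      by_contra hc
      exact hne.1 (if_neg hc)
    rw [init_unfoldArena] at hne ⊢
    obtain ⟨rest, rfl⟩ := exists_unfoldHist_of_extProb_ne_zero A hσ' r' [] A.init hne.2
    exact ⟨A.init :: rest, rfl⟩

end ProbabilityTransfer

section CylinderOuterMeasure

open MeasureTheory

variable {k : ℕ} {V : Type} [DecidableEq V] (A : Arena k V) (σ : Profile k V) (s : V)

open scoped Classical in
noncomputable def cylPremeasure (S : Set (Play V)) : ℝ≥0∞ :=
  if S = ∅ then 0 else ⨅ (w : List V) (_ : S ⊆ cyl w), wordProbFrom A σ s w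

theorem cylPremeasure_empty : cylPremeasure A σ s ∅ = 0 := if_pos rfl

noncomputable def prOuterMeasure : OuterMeasure (Play V) :=
  OuterMeasure.ofFunction (cylPremeasure A σ s) (cylPremeasure_empty A σ s)

theorem prOuterMeasure_apply (O : Set (Play V)) :
    prOuterMeasure A σ s O
      = ⨅ (T : ℕ → Set (Play V)) (_ : O ⊆ ⋃ j, T j), ∑' j, cylPremeasure A σ s (T j) :=
  OuterMeasure.ofFunction_apply _ _ _

theorem PrFrom_eq_prOuterMeasure : PrFrom A σ s = prOuterMeasure A σ s := rfl

theorem prOuterMeasure_le_wordProbFrom {S : Set (Play V)} {w : List V} (hS : S ⊆ cyl w) :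
    prOuterMeasure A σ s S ≤ wordProbFrom A σ s w := by
  refine (OuterMeasure.ofFunction_le S).trans ?_
  unfold cylPremeasure
  split
  · exact zero_le
  · exact iInf₂_le w hS

theorem prOuterMeasure_null [Countable V] :
    prOuterMeasure A σ s {π | ∃ L, wordProbFrom A σ s (π.take L) = 0} = 0 := by
  refine measure_mono_null (t := ⋃ (w : List V) (_ : wordProbFrom A σ s w = 0), cyl w) ?_ ?_
  · rintro π ⟨L, hL⟩
    exact Set.mem_iUnion₂.2 ⟨_, hL, (mem_cyl_iff_take_eq π _).2 (by rw [Play.length_take])⟩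
  · exact measure_iUnion_null fun w => measure_iUnion_null fun hw =>
      le_antisymm ((prOuterMeasure_le_wordProbFrom A σ s subset_rfl).trans hw.le) zero_le

theorem prOuterMeasure_le_of_cover {k' : ℕ} {W : Type} [DecidableEq W] (A' : Arena k' W)
    (σ' : Profile k' W) (s' : W) {O : Set (Play V)} {O' : Set (Play W)} {N : Set (Play V)}
    (hN : prOuterMeasure A σ s N = 0) (Ψ : Set (Play W) → Set (Play V)) (hΨ₀ : Ψ ∅ = ∅)
    (hΨ : ∀ S w', S ⊆ cyl w' → prOuterMeasure A σ s (Ψ S) ≤ wordProbFrom A' σ' s' w')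
    (hcov : ∀ T : ℕ → Set (Play W), O' ⊆ ⋃ j, T j → O ⊆ N ∪ ⋃ j, Ψ (T j)) :
    prOuterMeasure A σ s O ≤ prOuterMeasure A' σ' s' O' := by
  rw [prOuterMeasure_apply A' σ' s']
  refine le_iInf₂ fun T hT => ?_
  calc prOuterMeasure A σ s O ≤ prOuterMeasure A σ s (N ∪ ⋃ j, Ψ (T j)) :=
        measure_mono (hcov T hT)
    _ ≤ prOuterMeasure A σ s N + prOuterMeasure A σ s (⋃ j, Ψ (T j)) := measure_union_le _ _
    _ ≤ ∑' j, prOuterMeasure A σ s (Ψ (T j)) := by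
        rw [hN, zero_add]
        exact measure_iUnion_le _
    _ ≤ ∑' j, cylPremeasure A' σ' s' (T j) := ENNReal.tsum_le_tsum fun j => by
        unfold cylPremeasure
        split_ifs with hj
        · rw [hj, hΨ₀, measure_empty]
        · exact le_iInf₂ (hΨ (T j))

end CylinderOuterMeasure

theorem mem_infSet_iff_infinite {V : Type} (π : Play V) (v : V) :
    v ∈ infSet π ↔ (π ⁻¹' {v}).Infinite := by
  change _ ↔ {l | π l = v}.Infinite
  rw [← Nat.frequently_atTop_iff_infinite, Filter.frequently_atTop]
  rfl

theorem mem_infSet_comp_iff {V W : Type} [Finite W] (f : W → V) (π' : Play W) (v : V) :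
    v ∈ infSet (f ∘ π') ↔ ∃ w ∈ infSet π', f w = v := by
  constructor
  · intro hv
    rw [mem_infSet_iff_infinite, Set.preimage_comp, ← Set.biUnion_preimage_singleton] at hv
    obtain ⟨w, hw, hinf⟩ : ∃ w ∈ f ⁻¹' {v}, (π' ⁻¹' {w}).Infinite := by
      by_contra! h
      exact hv (Set.Finite.biUnion (Set.toFinite _) h)
    exact ⟨w, (mem_infSet_iff_infinite π' w).2 hinf, hw⟩
  · rintro ⟨w, hw, rfl⟩ m
    obtain ⟨l, hl, rfl⟩ := hw m
    exact ⟨l, hl, rfl⟩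

theorem unfoldPlay_mem_mullerObj_iff {n : ℕ} (t : ℕ) (π : Play (Fin n)) (φ : BForm (Fin n)) :
    unfoldPlay t π ∈ mullerObj (unfoldForm t φ) ↔ π ∈ mullerObj φ := by
  refine (holds_unfoldForm _ φ).trans (BForm.holds_congr (fun v => ?_) φ)
  have hlast : (fun w : UnfV (Fin n) t => w.val.getLast?) ∘ unfoldPlay t π = some ∘ π :=
    funext fun j => getLast?_unfoldVertex _ (π j)
  rw [← mem_infSet_comp_iff, hlast]
  exact ⟨fun h m => by simpa using h m, fun h m => by simpa using h m⟩

section PayoffTransfer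

variable {k n : ℕ} (A : Arena k (Fin n)) (t : ℕ) {σ' : Profile k (UnfV (Fin n) t)}

theorem prOuterMeasure_foldStrategy_le (hσ' : Profile.Valid (unfoldArena A t) σ')
    (φ : BForm (Fin n)) :
    prOuterMeasure A (foldStrategy t A.init ∘ σ') A.init (mullerObj φ)
      ≤ prOuterMeasure (unfoldArena A t) σ' (unfoldArena A t).init
          (mullerObj (unfoldForm t φ)) := by
  refine prOuterMeasure_le_of_cover _ _ _ _ _ _ (MeasureTheory.measure_empty (μ := _))
    (fun S' => unfoldPlay t ⁻¹' S') Set.preimage_empty (fun S' w' hS' => ?_)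
    (fun T hT π hπ => Or.inr ?_)
  · rcases (unfoldPlay t ⁻¹' S').eq_empty_or_nonempty with he | ⟨π₀, hπ₀⟩
    · rw [he, MeasureTheory.measure_empty]
      exact zero_le
    · have hw' : unfoldHist t [] (π₀.take w'.length) = w' := by
        rw [unfoldHist_take, (mem_cyl_iff_take_eq _ w').1 (hS' hπ₀)]
      calc _ ≤ wordProbFrom A (foldStrategy t A.init ∘ σ') A.init (π₀.take w'.length) := by
            refine prOuterMeasure_le_wordProbFrom _ _ _ fun π hπ => ?_
            rw [mem_cyl_iff_take_eq, Play.length_take]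
            refine unfoldHist_injective (t := t) [] ?_
            rw [hw', unfoldHist_take, (mem_cyl_iff_take_eq _ w').1 (hS' hπ)]
        _ = _ := by rw [wordProbFrom_foldStrategy A hσ', hw']
  · obtain ⟨j, hj⟩ := Set.mem_iUnion.1 (hT ((unfoldPlay_mem_mullerObj_iff t π φ).2 hπ))
    exact Set.mem_iUnion.2 ⟨j, hj⟩

theorem prOuterMeasure_unfoldArena_le (hσ' : Profile.Valid (unfoldArena A t) σ')
    (φ : BForm (Fin n)) :
    prOuterMeasure (unfoldArena A t) σ' (unfoldArena A t).init (mullerObj (unfoldForm t φ))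
      ≤ prOuterMeasure A (foldStrategy t A.init ∘ σ') A.init (mullerObj φ) := by
  refine prOuterMeasure_le_of_cover _ _ _ _ _ _ (prOuterMeasure_null _ _ _)
    (fun S => unfoldPlay t '' S) (Set.image_empty _) (fun S w hS => ?_) (fun T hT π' hπ' => ?_)
  · calc _ ≤ wordProbFrom (unfoldArena A t) σ' (unfoldArena A t).init (unfoldHist t [] w) := by
          refine prOuterMeasure_le_wordProbFrom _ _ _ ?_
          rintro _ ⟨π, hπ, rfl⟩
          rw [mem_cyl_iff_take_eq, length_unfoldHist, ← unfoldHist_take,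
            (mem_cyl_iff_take_eq π w).1 (hS hπ)]
      _ = _ := (wordProbFrom_foldStrategy A hσ' w).symm
  · by_cases hnull :
        ∃ L, wordProbFrom (unfoldArena A t) σ' (unfoldArena A t).init (π'.take L) = 0
    · exact Or.inl hnull
    · have heq := eq_unfoldPlay_of_forall_take A.init fun L =>
        exists_unfoldHist_of_wordProbFrom_ne_zero A hσ' fun h => hnull ⟨L, h⟩
      rw [heq, unfoldPlay_mem_mullerObj_iff] at hπ'
      obtain ⟨j, hj⟩ := Set.mem_iUnion.1 (hT hπ')
      exact Or.inr (Set.mem_iUnion.2 ⟨j, _, hj, heq.symm⟩)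

theorem pay_foldStrategy (hσ' : Profile.Valid (unfoldArena A t) σ')
    (obj : Fin (k + 1) → BForm (Fin n)) (i : Fin (k + 1)) :
    Pay A (fun i => mullerObj (obj i)) (foldStrategy t A.init ∘ σ') i
      = Pay (unfoldArena A t) (fun i => mullerObj (unfoldForm t (obj i))) σ' i := by
  rw [Pay, Pay, PrFrom_eq_prOuterMeasure, PrFrom_eq_prOuterMeasure]
  exact le_antisymm (prOuterMeasure_foldStrategy_le A t hσ' (obj i))
    (prOuterMeasure_unfoldArena_le A t hσ' (obj i))

end PayoffTransfer

theorem Profile.Valid.update {k : ℕ} {V : Type} {A : Arena k V} {σ : Profile k V}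
    (hσ : Profile.Valid A σ) (i : Fin (k + 1)) {τ : Strategy V} (hτ : Strategy.Valid A τ) :
    Profile.Valid A (Function.update σ i τ) := by
  intro j
  rcases eq_or_ne j i with rfl | hj
  · rwa [Function.update_self]
  · rw [Function.update_of_ne hj]
    exact hσ j

noncomputable def tMemoryEquivPositional {k : ℕ} {V : Type} [DecidableEq V] (A : Arena k V)
    (t : ℕ) :
    {σ : Strategy V // Strategy.Pure σ ∧ Strategy.TMemory t σ ∧ Strategy.Valid A σ} ≃
      {σ' : Strategy (UnfV V t) //
        Strategy.Positional σ' ∧ Strategy.Valid (unfoldArena A t) σ'} where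
  toFun σ := ⟨positionalLift t A.init σ.1, positionalLift_positional _ σ.2.1,
    liftStrategy_valid A _ σ.2.2.2⟩
  invFun σ' := ⟨foldStrategy t A.init σ'.1, foldStrategy_pure _ σ'.2.1.2,
    foldStrategy_tMemory _ σ'.2.1.1, foldStrategy_valid A σ'.2.2⟩
  left_inv σ := Subtype.ext (foldStrategy_positionalLift _ σ.2.2.1)
  right_inv σ' := Subtype.ext (positionalLift_foldStrategy A σ'.2.1.1 σ'.2.2)

section Synthesis

variable {k n : ℕ} (A : Arena k (Fin n)) (t : ℕ) (obj : Fin (k + 1) → BForm (Fin n))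

theorem zeroNE_unfoldArena_iff {σ' : Profile k (UnfV (Fin n) t)}
    (hσ' : Profile.Valid (unfoldArena A t) σ') :
    ZeroNE (unfoldArena A t) (fun i => mullerObj (unfoldForm t (obj i))) σ' ↔
      ZeroNE A (fun i => mullerObj (obj i)) (foldStrategy t A.init ∘ σ') := by
  constructor
  · intro hz i hi τ hτ
    have hlift : Strategy.Valid (unfoldArena A t) (historyLift t A.init τ) :=
      liftStrategy_valid A _ hτ
    calc Pay A _ (Function.update (foldStrategy t A.init ∘ σ') i τ) i
        = Pay A _ (foldStrategy t A.init ∘ Function.update σ' i (historyLift t A.init τ)) i :=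
          by rw [Function.comp_update, foldStrategy_historyLift]
      _ = Pay (unfoldArena A t) _ (Function.update σ' i (historyLift t A.init τ)) i :=
          pay_foldStrategy A t (hσ'.update i hlift) obj i
      _ ≤ Pay (unfoldArena A t) _ σ' i := hz i hi _ hlift
      _ = _ := (pay_foldStrategy A t hσ' obj i).symm
  · intro hz i hi τ' hτ'
    calc Pay (unfoldArena A t) _ (Function.update σ' i τ') i
        = Pay A _ (foldStrategy t A.init ∘ Function.update σ' i τ') i :=
          (pay_foldStrategy A t (hσ'.update i hτ') obj i).symm
      _ = Pay A _
            (Function.update (foldStrategy t A.init ∘ σ') i (foldStrategy t A.init τ')) i := by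
          rw [Function.comp_update]
      _ ≤ Pay A _ (foldStrategy t A.init ∘ σ') i := hz i hi _ (foldStrategy_valid A hτ')
      _ = _ := pay_foldStrategy A t hσ' obj i

theorem ncrsp_unfoldArena_of_ncrsp (μ : ℚ)
    (h : NCRSPAnswer A (fun i => mullerObj (obj i))
      (fun σ => Strategy.Pure σ ∧ Strategy.TMemory t σ)
      (fun σ => Strategy.Pure σ ∧ Strategy.TMemory t σ) μ) :
    NCRSPAnswer (unfoldArena A t) (fun i => mullerObj (unfoldForm t (obj i)))
      Strategy.Positional Strategy.Positional μ := by
  obtain ⟨σ₀, hv, ⟨hp, hm⟩, hσ₀⟩ := h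
  refine ⟨positionalLift t A.init σ₀, liftStrategy_valid A _ hv,
    positionalLift_positional _ hp, fun σ' h0 hσ' henv hne => ?_⟩
  rw [← pay_foldStrategy A t hσ' obj 0]
  refine hσ₀ _ ?_ (fun i => foldStrategy_valid A (hσ' i))
    (fun i hi => ⟨foldStrategy_pure _ (henv i hi).2, foldStrategy_tMemory _ (henv i hi).1⟩)
    ((zeroNE_unfoldArena_iff A t obj hσ').1 hne)
  rw [Function.comp_apply, h0, foldStrategy_positionalLift _ hm]

theorem ncrsp_of_ncrsp_unfoldArena (μ : ℚ)
    (h : NCRSPAnswer (unfoldArena A t) (fun i => mullerObj (unfoldForm t (obj i)))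
      Strategy.Positional Strategy.Positional μ) :
    NCRSPAnswer A (fun i => mullerObj (obj i))
      (fun σ => Strategy.Pure σ ∧ Strategy.TMemory t σ)
      (fun σ => Strategy.Pure σ ∧ Strategy.TMemory t σ) μ := by
  obtain ⟨σ₀', hv, ⟨hs, hp⟩, hσ₀'⟩ := h
  refine ⟨foldStrategy t A.init σ₀', foldStrategy_valid A hv,
    ⟨foldStrategy_pure _ hp, foldStrategy_tMemory _ hs⟩, fun σ h0 hσ henv hne => ?_⟩
  have hmem : ∀ i, Strategy.TMemory t (σ i) := fun i => by
    rcases eq_or_ne i 0 with rfl | hi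
    · rw [h0]
      exact foldStrategy_tMemory _ hs
    · exact (henv i hi).2
  have hfold : foldStrategy t A.init ∘ (positionalLift t A.init ∘ σ) = σ :=
    funext fun i => foldStrategy_positionalLift _ (hmem i)
  have hσ' : Profile.Valid (unfoldArena A t) (positionalLift t A.init ∘ σ) :=
    fun i => liftStrategy_valid A _ (hσ i)
  rw [← hfold, pay_foldStrategy A t hσ' obj 0]
  refine hσ₀' _ ?_ hσ' (fun i hi => positionalLift_positional _ (henv i hi).1)
    ((zeroNE_unfoldArena_iff A t obj hσ').2 (by rwa [hfold]))
  rw [Function.comp_apply, h0, positionalLift_foldStrategy A hs hv]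

end Synthesis

theorem unfolded_game_correct_general {k n : ℕ} (A : Arena k (Fin n))
    (t : ℕ) (obj : Fin (k + 1) → BForm (Fin n)) (μ : ℚ) :
    (∀ c : ℕ, t ≤ c * n + c →
      Nat.card (UnfV (Fin n) t) ≤ (n + 1) ^ (c * n + c + 2)) ∧
    Nonempty
      ({σ : Strategy (Fin n) //
          Strategy.Pure σ ∧ Strategy.TMemory t σ ∧ Strategy.Valid A σ} ≃
       {σ' : Strategy (UnfV (Fin n) t) //
          Strategy.Positional σ' ∧ Strategy.Valid (unfoldArena A t) σ'}) ∧
    (NCRSPAnswer A (fun i => mullerObj (obj i))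
        (fun σ => Strategy.Pure σ ∧ Strategy.TMemory t σ)
        (fun σ => Strategy.Pure σ ∧ Strategy.TMemory t σ) μ ↔
      NCRSPAnswer (unfoldArena A t)
        (fun i => mullerObj (unfoldForm t (obj i)))
        Strategy.Positional Strategy.Positional μ) := by
  refine ⟨fun c hc => ?_, ⟨tMemoryEquivPositional A t⟩,
    ncrsp_unfoldArena_of_ncrsp A t obj μ, ncrsp_of_ncrsp_unfoldArena A t obj μ⟩
  calc Nat.card (UnfV (Fin n) t) ≤ (Nat.card (Fin n) + 1) ^ (t + 1) := card_UnfV_le _ t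
    _ ≤ (n + 1) ^ (c * n + c + 2) := by
      rw [Nat.card_fin]
      exact Nat.pow_le_pow_right (by omega) (by omega)

/-- The unfolded game `G'` of an SMG `G` with Muller
objectives: it has at most exponentially many (`n^{O(n)}` for `t ∈ O(n)`)
vertices, pure `t`-memory strategies of `G` correspond to positional
strategies of `G'`, and the answer of Pure `t`-memory-Muller-NCRSP for
`(G, μ)` equals the answer of Positional-Muller-NCRSP for `(G', μ)`. -/
theorem unfolded_game_correct {k n : ℕ} (A : Arena k (Fin n)) (hwf : A.WF)
    (t : ℕ) (obj : Fin (k + 1) → BForm (Fin n)) (μ : ℚ) :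
    (∀ c : ℕ, t ≤ c * n + c →
      Nat.card (UnfV (Fin n) t) ≤ (n + 1) ^ (c * n + c + 2)) ∧
    Nonempty
      ({σ : Strategy (Fin n) //
          Strategy.Pure σ ∧ Strategy.TMemory t σ ∧ Strategy.Valid A σ} ≃
       {σ' : Strategy (UnfV (Fin n) t) //
          Strategy.Positional σ' ∧ Strategy.Valid (unfoldArena A t) σ'}) ∧
    (NCRSPAnswer A (fun i => mullerObj (obj i))
        (fun σ => Strategy.Pure σ ∧ Strategy.TMemory t σ)
        (fun σ => Strategy.Pure σ ∧ Strategy.TMemory t σ) μ ↔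
      NCRSPAnswer (unfoldArena A t)
        (fun i => mullerObj (unfoldForm t (obj i)))
        Strategy.Positional Strategy.Positional μ) :=
  unfolded_game_correct_general A t obj μ

end NCRSPPaper
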